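/- Fix integers ℓ ≥ 1 and k ≥ 1 and set N = k + 2ℓ + 1. Let x ∈ ℤ^ℓ be strictly dominant (x₁ > x₂ > ⋯ > x_ℓ ≥ 1) and regular (x_i + x_j ≢ 0 (mod N) for all i ≠ j, and 2x_i ≢ 0 (mod N) for all i), and assume N < 2x₁ and x₁ < N. Then there exists an integer i with 1 ≤ i ≤ ℓ such that y := w_i(x) is strictly dominant (y₁ > y₂ > ⋯ > y_ℓ ≥ 1) and satisfies y₁ < x₁. -/

import Mathlib

open BigOperators

/-- The generators of the affine Weyl group `W̊ ⋉ N ℤ^ℓ` acting on `ℤ^ℓ`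
(coordinates `0`-indexed, so `x 0` is the first coordinate `x₁`):
`s₀ x = (N - x₁, x₂, …, x_ℓ)`; for `1 ≤ j ≤ ℓ - 1`, `s_j` transposes the
(1-indexed) coordinates `j` and `j+1`; `s_ℓ` negates the last coordinate. -/
def sRefl (ℓ : ℕ) (N : ℤ) (j : ℕ) (x : Fin ℓ → ℤ) : Fin ℓ → ℤ :=
  if j = 0 then
    fun i => if i.1 = 0 then N - x i else x i
  else if hj : j < ℓ then
    fun i => if i.1 = j - 1 then x ⟨j, hj⟩
             else if i.1 = j then x ⟨j - 1, by omega⟩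
             else x i
  else
    fun i => if i.1 = ℓ - 1 then - x i else x i

/-- The elements `w₀ = id` and `w_i = s_{i-1} s_{i-2} ⋯ s₁ s₀` for `i ≥ 1`. -/
def wElem (ℓ : ℕ) (N : ℤ) : ℕ → (Fin ℓ → ℤ) → (Fin ℓ → ℤ)
  | 0 => id
  | (i + 1) => fun x => sRefl ℓ N i (wElem ℓ N i x)

/-- A point `x ∈ ℤ^ℓ` is strictly dominant if `x₁ > x₂ > ⋯ > x_ℓ ≥ 1`. -/
def StrictDom (ℓ : ℕ) (x : Fin ℓ → ℤ) : Prop :=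
  (∀ i j : Fin ℓ, i < j → x j < x i) ∧ (∀ i : Fin ℓ, 1 ≤ x i)

/-- A point `x ∈ ℤ^ℓ` is regular (has trivial stabilizer in `W̊ ⋉ N ℤ^ℓ`) if
`x_i + x_j ≢ 0 (mod N)` for `i ≠ j` and `2 x_i ≢ 0 (mod N)` for all `i`. -/
def RegularPt (ℓ : ℕ) (N : ℤ) (x : Fin ℓ → ℤ) : Prop :=
  (∀ i j : Fin ℓ, i ≠ j → ¬ (N ∣ x i + x j)) ∧ (∀ i : Fin ℓ, ¬ (N ∣ 2 * x i))

/-!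
Put `a = N - x₁`. The hypotheses `N < 2x₁ < 2N` give `0 < a < x₁`, and regularity gives
`a ≠ x_j` for every `j` (`a = x₁` would mean `N ∣ 2x₁`, and `a = x_j` would mean `N ∣ x₁ + x_j`).
Since `s₀` replaces `x₁` by `a` and `s₁, …, s_i` then move it one slot to the right at a time,
`w_{i+1}` deletes `x₁` and inserts `a` in slot `i + 1`. Inserting `a` right after the last `x_j`
exceeding it keeps the sequence strictly decreasing, and the new first coordinate is `x₂` or `a`,
both below `x₁`.
-/

open Equiv Finset Fin

theorem Fin.coe_cycleRange {n : ℕ} (i j : Fin n) :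
    (cycleRange i j : ℕ) = if j < i then (j : ℕ) + 1 else if j = i then 0 else j := by
  split_ifs with hlt heq
  · exact coe_cycleRange_of_lt hlt
  · rw [coe_cycleRange_of_le heq.le, if_pos heq]
  · rw [cycleRange_of_gt (lt_of_le_of_ne (not_lt.1 hlt) (Ne.symm heq))]

theorem Fin.cycleRange_castSucc_mul_swap {n : ℕ} (i : Fin n) :
    cycleRange i.castSucc * swap i.castSucc i.succ = cycleRange i.succ := by
  ext j
  simp only [Perm.mul_apply, coe_cycleRange, swap_apply_def]
  split_ifs <;> simp_all [Fin.ext_iff, Fin.lt_def] <;> omega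

theorem sRefl_zero (n : ℕ) (N : ℤ) (x : Fin (n + 1) → ℤ) :
    sRefl (n + 1) N 0 x = cons (N - x 0) (tail x) := by
  ext j
  cases j using Fin.cases <;> simp [sRefl, tail]

theorem sRefl_succ (n : ℕ) (N : ℤ) (i : Fin n) (x : Fin (n + 1) → ℤ) :
    sRefl (n + 1) N (i + 1) x = x ∘ swap i.castSucc i.succ := by
  ext j
  simp only [sRefl, Nat.add_one_ne_zero, if_false, dif_pos (Nat.succ_lt_succ i.isLt),
    Function.comp_apply, swap_apply_def, Fin.ext_iff, val_castSucc, val_succ, Nat.add_sub_cancel]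
  split_ifs <;> rfl

theorem wElem_succ (n : ℕ) (N : ℤ) (x : Fin (n + 1) → ℤ) (i : Fin (n + 1)) :
    wElem (n + 1) N (i + 1) x = i.insertNth (N - x 0) (tail x) := by
  rw [← cons_comp_cycleRange]
  induction i using Fin.induction with
  | zero => simp [wElem, sRefl_zero]
  | succ i ih =>
    change sRefl (n + 1) N (i + 1) (wElem (n + 1) N (i.castSucc + 1) x) = _
    rw [sRefl_succ, ih, ← cycleRange_castSucc_mul_swap]
    rfl

theorem Antitone.exists_lt_iff_le {ι α : Type*} [Fintype ι] [LinearOrder ι]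
    [LinearOrder α] {x : ι → α} (hx : Antitone x) {a : α} (h : ∃ j, a < x j) :
    ∃ m, ∀ j, a < x j ↔ j ≤ m := by
  obtain ⟨j₀, hj₀⟩ := h
  have hne : (univ.filter fun j => a < x j).Nonempty := ⟨j₀, by simpa using hj₀⟩
  refine ⟨(univ.filter fun j => a < x j).max' hne,
    fun j => ⟨fun hj => le_max' _ j (mem_filter.2 ⟨mem_univ _, hj⟩), fun hj => ?_⟩⟩
  exact (mem_filter.1 (max'_mem _ hne)).2.trans_le (hx hj)

theorem Fin.strictAnti_insertNth_tail {n : ℕ} {α : Type*} [LinearOrder α]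
    {x : Fin (n + 1) → α} (hx : StrictAnti x) {a : α} (ha : ∀ j, a ≠ x j) {m : Fin (n + 1)}
    (hm : ∀ j, a < x j ↔ j ≤ m) : StrictAnti (m.insertNth a (tail x)) := by
  refine (strictMono_insertNth_iff (α := αᵒᵈ) m a (tail x)).2
    ⟨hx.comp_strictMono strictMono_succ, fun j hj => ?_, fun j hj => ?_⟩
  · exact (hm j.succ).2 (castSucc_lt_iff_succ_le.1 hj)
  · have hle : x j.succ ≤ a :=
      not_lt.1 fun h => ((hm j.succ).1 h).not_gt (castSucc_lt_succ.trans_le' hj)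
    exact show x j.succ < a from hle.lt_of_ne (ha _).symm

theorem RegularPt.sub_ne {ℓ : ℕ} {N : ℤ} {x : Fin ℓ → ℤ} (h : RegularPt ℓ N x) (i j : Fin ℓ) :
    N - x i ≠ x j := by
  intro hij
  obtain rfl | hne := eq_or_ne i j
  · exact h.2 i ⟨1, by linarith⟩
  · exact h.1 i j hne ⟨1, by linarith⟩

/-- The key inductive step of the alcove algorithm: with `N = k + 2ℓ + 1`, if
`x ∈ ℤ^ℓ` is strictly dominant and regular with `N < 2 x₁` and `x₁ < N`, then
some `w_i` with `1 ≤ i ≤ ℓ` maps `x` to a strictly dominant point whose first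
coordinate is strictly smaller. -/
theorem alcove_step (ℓ k : ℕ) (hl : 1 ≤ ℓ)
    (x : Fin ℓ → ℤ)
    (hdom : StrictDom ℓ x)
    (hreg : RegularPt ℓ ((k : ℤ) + 2 * ℓ + 1) x)
    (hbig : (k : ℤ) + 2 * ℓ + 1 < 2 * x ⟨0, by omega⟩)
    (hx1 : x ⟨0, by omega⟩ < (k : ℤ) + 2 * ℓ + 1) :
    ∃ i : ℕ, 1 ≤ i ∧ i ≤ ℓ ∧
      StrictDom ℓ (wElem ℓ ((k : ℤ) + 2 * ℓ + 1) i x) ∧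
      (wElem ℓ ((k : ℤ) + 2 * ℓ + 1) i x) ⟨0, by omega⟩ < x ⟨0, by omega⟩ := by
  obtain ⟨n, rfl⟩ : ∃ n, ℓ = n + 1 := ⟨ℓ - 1, by omega⟩
  simp only [Fin.zero_eta] at hbig hx1 ⊢
  set N : ℤ := (k : ℤ) + 2 * ↑(n + 1) + 1
  obtain ⟨hanti, hpos⟩ : StrictAnti x ∧ _ := hdom
  have ha_lt : N - x 0 < x 0 := by linarith
  obtain ⟨m, hm⟩ := hanti.antitone.exists_lt_iff_le ⟨0, ha_lt⟩
  have hentries : ∀ p : ℤ → Prop, p (N - x 0) → (∀ i : Fin n, p (x i.succ)) →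
      ∀ j, p ((m.insertNth (N - x 0) (tail x) : Fin (n + 1) → ℤ) j) := fun p ha hx =>
    m.forall_iff_succAbove.2 ⟨by simpa using ha, fun i => by simpa [tail] using hx i⟩
  refine ⟨m + 1, by omega, m.isLt, ⟨?_, ?_⟩, ?_⟩ <;> rw [wElem_succ]
  · exact strictAnti_insertNth_tail hanti (hreg.sub_ne 0) hm
  · exact hentries _ (by linarith) fun i => hpos _
  · exact hentries (· < x 0) ha_lt (fun i => hanti (succ_pos i)) 0
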